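/- arXiv:0710.1354 — 6 statements merged into one kernel-verified Lean document; each statement's English description precedes it below -/
import Mathlib

section
/- Let p be a prime such that 2 is a primitive root modulo p (i.e., 2 generates the multiplicative group of nonzero residues mod p). Then for every natural number x, S_p(2^p · x) = p · S_p(2 · x). -/
/-!
Writing `n < 2^k x` as `n = 2^k q + r` with `r < 2^k` splits the binary digits, so `S_m(2^k x)` is
the sum over `q < x` of `(-1)^σ(q)` times the coefficient at `-2^k q` of `∏_{j<k} (1 - X^{2^j})`
in the group ring `ℤ[ℤ/m]`. Since `2^p ≡ 2 (mod p)`, it suffices that this product for `k = p` is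
`p` times the one for `k = 1`, namely `1 - X`. As 2 is a primitive root, its first `p - 1`
factors are the `1 - X^u` with `u ≠ 0`, and the last one is `1 - X`. The product
`P = ∏_{u ≠ 0} (1 - X^u)` is invariant under `u ↦ c u`, so all its coefficients off `0` are equal,
hence `P (1 - X) = (α - β) (1 - X)` with `α, β` the coefficients at `0` and `1`; evaluating at a
primitive `p`-th root of unity shows `α - β = p`.
-/

/-- The Newman sum `S_m(x) = ∑_{0 ≤ n < x, m ∣ n} (-1)^{σ(n)}`, where `σ(n)` is the
number of 1's in the binary expansion of `n`. -/
def newmanSum (m x : ℕ) : ℤ :=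
  ∑ n ∈ Finset.range x, if m ∣ n then (-1 : ℤ) ^ (Nat.digits 2 n).sum else 0

open Finset AddMonoidAlgebra

theorem Nat.digits_sum_base_pow_mul_add {b k q r : ℕ} (hb : 1 < b) (hr : r < b ^ k) :
    (b.digits (b ^ k * q + r)).sum = (b.digits q).sum + (b.digits r).sum := by
  rcases q.eq_zero_or_pos with rfl | hq
  · simp
  have hlen : (b.digits r).length ≤ k := (Nat.digits_length_le_iff hb r).mpr hr
  have := Nat.digits_append_zeroes_append_digits (k := k - (b.digits r).length) hb hq (n := r)
  rw [Nat.add_sub_cancel' hlen] at this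
  rw [add_comm, ← this]
  simp [add_comm]

theorem prod_one_sub_pow_two_pow {R : Type*} [CommRing R] (x : R) (k : ℕ) :
    ∏ j ∈ range k, (1 - x ^ 2 ^ j) = ∑ n ∈ range (2 ^ k), (-1) ^ (Nat.digits 2 n).sum * x ^ n := by
  induction k with
  | zero => simp
  | succ k ih =>
    have hdigits (n : ℕ) (hn : n ∈ range (2 ^ k)) :
        (Nat.digits 2 (2 ^ k + n)).sum = 1 + (Nat.digits 2 n).sum := by
      simpa using Nat.digits_sum_base_pow_mul_add (q := 1) one_lt_two (mem_range.mp hn)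
    rw [prod_range_succ, ih, pow_succ, mul_two, sum_range_add, mul_one_sub, sum_mul,
      sub_eq_add_neg, ← sum_neg_distrib]
    congr 1
    refine sum_congr rfl fun n hn => ?_
    rw [hdigits n hn]
    ring

theorem Finset.sum_range_mul_eq_sum_sum {M : Type*} [AddCommMonoid M] (f : ℕ → M) (m x : ℕ) :
    ∑ n ∈ range (m * x), f n = ∑ q ∈ range x, ∑ r ∈ range m, f (m * q + r) := by
  induction x with
  | zero => simp
  | succ x ih => rw [mul_add_one, sum_range_add, ih, sum_range_succ]

noncomputable def thueMorseProd (m k : ℕ) : AddMonoidAlgebra ℤ (ZMod m) :=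
  ∏ j ∈ range k, (1 - of' ℤ (ZMod m) 1 ^ 2 ^ j)

theorem AddMonoidAlgebra.of'_one_pow {R G : Type*} [Semiring R] [AddMonoidWithOne G] (n : ℕ) :
    of' R G 1 ^ n = of' R G n := by
  simp [of'_apply, single_pow]

theorem coeff_thueMorseProd (m k : ℕ) (a : ZMod m) :
    (thueMorseProd m k).coeff a =
      ∑ n ∈ range (2 ^ k), if (n : ZMod m) = a then (-1) ^ (Nat.digits 2 n).sum else 0 := by
  classical
  rw [thueMorseProd, prod_one_sub_pow_two_pow, coeff_sum, Finsupp.finsetSum_apply]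
  refine sum_congr rfl fun n _ => ?_
  rw [of'_one_pow, of'_apply, one_def, ← single_neg, single_pow, single_mul_single]
  simp [Finsupp.single_apply]

theorem newmanSum_two_pow_mul (m k x : ℕ) :
    newmanSum m (2 ^ k * x) =
      ∑ q ∈ range x, (-1) ^ (Nat.digits 2 q).sum * (thueMorseProd m k).coeff (-(2 ^ k * q)) := by
  rw [newmanSum, sum_range_mul_eq_sum_sum]
  refine sum_congr rfl fun q _ => ?_
  rw [coeff_thueMorseProd, mul_sum]
  refine sum_congr rfl fun r hr => ?_
  have hdvd : m ∣ 2 ^ k * q + r ↔ (r : ZMod m) = -(2 ^ k * q) := by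
    rw [← ZMod.natCast_eq_zero_iff, eq_neg_iff_add_eq_zero, add_comm]
    push_cast
    rfl
  rw [Nat.digits_sum_base_pow_mul_add one_lt_two (mem_range.mp hr), pow_add]
  simp only [hdvd, mul_ite, mul_zero]

section FiniteField

variable {K : Type*} [Field K] [Fintype K] [DecidableEq K]

variable (K) in
noncomputable def prodOneSubOf : AddMonoidAlgebra ℤ K :=
  ∏ u ∈ univ.erase 0, (1 - of' ℤ K u)

theorem coeff_prodOneSubOf_mul {c : K} (hc : c ≠ 0) (b : K) :
    (prodOneSubOf K).coeff (c * b) = (prodOneSubOf K).coeff b := by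
  let e : K ≃+ K := .mk' (Equiv.mulLeft₀ c hc) (mul_add c)
  have hfix : mapDomainRingEquiv ℤ e (prodOneSubOf K) = prodOneSubOf K := by
    simp only [prodOneSubOf, map_prod, map_sub, map_one, of'_apply, mapDomainRingEquiv_single]
    refine prod_nbij' (c * ·) (c⁻¹ * ·) ?_ ?_ ?_ ?_ fun _ _ => rfl <;> simp [hc]
  nth_rw 1 [← hfix]
  rw [coeff_mapDomainRingEquiv, Finsupp.equivMapDomain_apply]
  exact congrArg _ (inv_mul_cancel_left₀ hc b)

theorem coeff_prodOneSubOf_of_ne_zero {b : K} (hb : b ≠ 0) :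
    (prodOneSubOf K).coeff b = (prodOneSubOf K).coeff 1 := by
  simpa using coeff_prodOneSubOf_mul hb 1

theorem prodOneSubOf_mul_one_sub_of' :
    prodOneSubOf K * (1 - of' ℤ K 1) =
      ((prodOneSubOf K).coeff 0 - (prodOneSubOf K).coeff 1) • (1 - of' ℤ K 1) := by
  ext a
  rw [mul_sub, mul_one, coeff_sub, Finsupp.sub_apply, of'_apply, coeff_mul_single_apply,
    coeff_smul_apply, one_def]
  by_cases h0 : a = 0
  · subst h0
    simp [coeff_prodOneSubOf_of_ne_zero (neg_ne_zero.mpr one_ne_zero : (-1 : K) ≠ 0)]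
  by_cases h1 : a = 1
  · subst h1
    simp
  have h1' : a + -1 ≠ 0 := fun h => h1 (by linear_combination h)
  simp [coeff_prodOneSubOf_of_ne_zero h0, coeff_prodOneSubOf_of_ne_zero h1', h0, h1]

theorem prod_range_one_sub_of'_pow {g : K} (hg : IsPrimitiveRoot g (Fintype.card K - 1)) :
    ∏ j ∈ range (Fintype.card K - 1), (1 - of' ℤ K (g ^ j)) = prodOneSubOf K := by
  have hcard : Fintype.card K - 1 ≠ 0 := by have := Fintype.one_lt_card (α := K); omega
  have : NeZero (Fintype.card K - 1) := ⟨hcard⟩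
  refine prod_nbij (g ^ ·) (fun j _ => ?_) (fun i hi j hj hij => ?_) (fun u hu => ?_) fun _ _ => rfl
  · simpa using pow_ne_zero j (hg.ne_zero hcard)
  · exact hg.pow_inj (mem_range.mp hi) (mem_range.mp hj) hij
  · obtain ⟨j, hj, rfl⟩ :=
      hg.eq_pow_of_pow_eq_one (FiniteField.pow_card_sub_one_eq_one u (ne_of_mem_erase hu))
    exact ⟨j, mem_range.mpr hj, rfl⟩

end FiniteField

theorem IsPrimitiveRoot.prod_erase_zero_one_sub_pow_val {R : Type*} [CommRing R] [IsDomain R]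
    {n : ℕ} [NeZero n] {ζ : R} (hζ : IsPrimitiveRoot ζ n) :
    ∏ u ∈ univ.erase (0 : ZMod n), (1 - ζ ^ u.val) = n := by
  obtain ⟨m, rfl⟩ : ∃ m, n = m + 1 := Nat.exists_eq_add_one.mpr (NeZero.pos n)
  have hval (k : ℕ) (hk : k ∈ range m) : ((k + 1 : ℕ) : ZMod (m + 1)).val = k + 1 :=
    ZMod.val_cast_of_lt (by simpa using hk)
  rw [Nat.cast_add_one, ← hζ.prod_one_sub_pow_eq_order]
  symm
  refine prod_nbij (fun k => ((k + 1 : ℕ) : ZMod (m + 1))) (fun k hk => ?_)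
    (fun i hi j hj hij => ?_) (fun u hu => ?_) fun k hk => by rw [hval k hk]
  · refine mem_erase.mpr ⟨fun h => ?_, mem_univ _⟩
    simpa only [h, ZMod.val_zero, Nat.zero_ne_add_one] using hval k hk
  · simpa only [hval i hi, hval j hj, Nat.add_right_cancel_iff] using congrArg ZMod.val hij
  · have hu0 : u.val ≠ 0 := by simpa [ZMod.val_eq_zero] using ne_of_mem_erase hu
    refine ⟨u.val - 1, mem_range.mpr (by have := u.val_lt; omega), ?_⟩
    simp [Nat.sub_add_cancel (Nat.pos_of_ne_zero hu0)]

-- Evaluate at the character `u ↦ ζ^u` of a primitive `p`-th root `ζ`: the product becomes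
-- `∏_{0<k<p} (1 - ζ^k) = p`, while the coefficient expansion becomes the left-hand side, because
-- the coefficients off `0` are all equal and `∑_{u ≠ 0} ζ^u = -1`.
theorem coeff_zero_sub_coeff_one_prodOneSubOf (p : ℕ) [Fact p.Prime] :
    (prodOneSubOf (ZMod p)).coeff 0 - (prodOneSubOf (ZMod p)).coeff 1 = p := by
  have hp := (Fact.out : p.Prime)
  set P := prodOneSubOf (ZMod p)
  have hζ := Complex.isPrimitiveRoot_exp p hp.ne_zero
  set χ := AddChar.zmodChar p hζ.pow_eq_one
  let ψ := AddMonoidAlgebra.lift ℤ ℂ (ZMod p) χ.toMonoidHom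
  have hχ : χ ≠ 1 := by
    rw [AddChar.zmod_char_ne_one_iff, ← Nat.cast_one, AddChar.zmodChar_apply', pow_one]
    exact hζ.ne_one hp.one_lt
  have hsum : ∑ u ∈ univ.erase 0, χ u = -1 := by
    rw [sum_erase_eq_sub (mem_univ 0), AddChar.sum_eq_zero_of_ne_one hχ, AddChar.map_zero_eq_one,
      zero_sub]
  have hψP : ψ P = P.coeff 0 - P.coeff 1 := by
    rw [lift_apply, Finsupp.sum_fintype _ _ (by simp), ← add_sum_erase _ _ (mem_univ 0),
      sum_congr rfl fun u hu => by rw [coeff_prodOneSubOf_of_ne_zero (ne_of_mem_erase hu)]]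
    simp only [AddChar.toMonoidHom_apply, toAdd_ofAdd, AddChar.map_zero_eq_one, zsmul_eq_mul,
      ← mul_sum, hsum]
    ring
  have hψP' : ψ P = p := by
    simp only [P, prodOneSubOf, ψ, map_prod, map_sub, map_one, of'_apply, lift_single, one_smul,
      AddChar.toMonoidHom_apply, χ, AddChar.zmodChar_apply]
    exact hζ.prod_erase_zero_one_sub_pow_val
  exact_mod_cast hψP.symm.trans hψP'

theorem thueMorseProd_prime_eq_smul {p : ℕ} (hp : p.Prime) (h2 : orderOf (2 : ZMod p) = p - 1) :
    thueMorseProd p p = (p : ℤ) • thueMorseProd p 1 := by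
  have := Fact.mk hp
  have hg : IsPrimitiveRoot (2 : ZMod p) (Fintype.card (ZMod p) - 1) := by
    rw [ZMod.card, ← h2]
    exact IsPrimitiveRoot.orderOf 2
  calc thueMorseProd p p
      = (∏ j ∈ range (p - 1), (1 - of' ℤ (ZMod p) (2 ^ j))) * (1 - of' ℤ (ZMod p) 1) := by
        rw [thueMorseProd, show range p = range (p - 1 + 1) by rw [Nat.sub_add_cancel hp.one_le],
          prod_range_succ]
        simp only [of'_one_pow, Nat.cast_pow, Nat.cast_ofNat, ← h2, pow_orderOf_eq_one]
    _ = prodOneSubOf (ZMod p) * (1 - of' ℤ (ZMod p) 1) := by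
        rw [← prod_range_one_sub_of'_pow hg, ZMod.card]
    _ = (p : ℤ) • thueMorseProd p 1 := by
        rw [prodOneSubOf_mul_one_sub_of', coeff_zero_sub_coeff_one_prodOneSubOf, thueMorseProd]
        simp

/-- If 2 is a primitive root of a prime `p`, then `S_p(2^p x) = p · S_p(2 x)`. -/
theorem newmanSum_pow_prime_primitiveRoot
    (p : ℕ) (hp : p.Prime) (h2 : orderOf (2 : ZMod p) = p - 1) :
    ∀ x : ℕ, newmanSum p (2 ^ p * x) = p * newmanSum p (2 * x) := by
  have := Fact.mk hp
  intro x
  have h1 := newmanSum_two_pow_mul p 1 x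
  rw [pow_one] at h1
  rw [newmanSum_two_pow_mul, h1, mul_sum, thueMorseProd_prime_eq_smul hp h2]
  refine sum_congr rfl fun q _ => ?_
  rw [ZMod.pow_card, pow_one, coeff_smul_apply, smul_eq_mul]
  ring
end

section
/- Let p be a prime such that 2 is a primitive root modulo p. Then for all natural numbers x ≤ y, S_p([2^p x, 2^p y)) = p · S_p([2x, 2y)), where S_p([a, b)) denotes S_p(b) − S_p(a). -/
/-!
For `k = 1` and `k = p`, split `[2^k x, 2^k y)` into the blocks `[2^k n, 2^k n + 2^k)`. On such
a block the sign `t(m) = (-1)^σ(m)` factors as `t(2^k n + r) = t(n) t(r)`, and the multiples of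
`p` are the `r ≡ -2^k n (mod p)`; for `k = p` this is `r ≡ -2n` by Fermat. So it suffices that
every residue class sum of `t` over `[0, 2^p)` is `p` times the corresponding one over `[0, 2)`.
By Fourier analysis on `ZMod p` this can be checked on the generating functions at the `p`-th
roots of unity `w`: there `∑_{r<2^p} t(r) w^r = ∏_{i<p} (1 - w^(2^i))`. For `w ≠ 1`, since `2`
generates `(ZMod p)ˣ`, the `w^(2^i)` with `i < p - 1` run through all primitive `p`-th roots of
unity, whose factors multiply to `Φ_p(1) = p`, and the last factor is `1 - w^(2^(p-1)) = 1 - w`.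
-/

open Finset Polynomial

def thueMorseSign (n : ℕ) : ℤ := (-1) ^ (Nat.digits 2 n).sum

lemma digits_sum_two_pow_mul_add {k r : ℕ} (n : ℕ) (hr : r < 2 ^ k) :
    (Nat.digits 2 (2 ^ k * n + r)).sum = (Nat.digits 2 n).sum + (Nat.digits 2 r).sum := by
  rcases n.eq_zero_or_pos with rfl | hn
  · simp
  have hlen := (Nat.digits_length_le_iff one_lt_two r).2 hr
  have h := Nat.digits_append_zeroes_append_digits (n := r) (k := k - (Nat.digits 2 r).length)
    one_lt_two hn
  rw [Nat.add_sub_cancel' hlen, add_comm r] at h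
  rw [← h]
  simp [add_comm]

lemma thueMorseSign_two_pow_mul_add {k r : ℕ} (n : ℕ) (hr : r < 2 ^ k) :
    thueMorseSign (2 ^ k * n + r) = thueMorseSign n * thueMorseSign r := by
  rw [thueMorseSign, digits_sum_two_pow_mul_add n hr, pow_add, thueMorseSign, thueMorseSign]

lemma sum_range_two_pow_thueMorseSign_mul_pow {R : Type*} [CommRing R] (w : R) (k : ℕ) :
    ∑ r ∈ range (2 ^ k), (thueMorseSign r : R) * w ^ r =
      ∏ i ∈ range k, (1 - w ^ 2 ^ i) := by
  induction k with
  | zero => simp [thueMorseSign]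
  | succ k ih =>
    have hhigh : ∀ r ∈ range (2 ^ k), (thueMorseSign (2 ^ k + r) : R) * w ^ (2 ^ k + r) =
        -w ^ 2 ^ k * ((thueMorseSign r : R) * w ^ r) := by
      intro r hr
      have hsign := thueMorseSign_two_pow_mul_add 1 (mem_range.1 hr)
      rw [mul_one, show thueMorseSign 1 = -1 by rfl] at hsign
      rw [hsign, pow_add]
      push_cast
      ring
    rw [pow_succ, mul_two, sum_range_add, sum_congr rfl hhigh, ← mul_sum, ih, prod_range_succ]
    ring

lemma sum_range_two_pow_ite_dvd_mul_add (m k n : ℕ) :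
    ∑ r ∈ range (2 ^ k), (if m ∣ 2 ^ k * n + r then thueMorseSign (2 ^ k * n + r) else 0) =
      thueMorseSign n * ∑ r ∈ range (2 ^ k) with ((r : ℕ) : ZMod m) = -(2 ^ k * n),
        thueMorseSign r := by
  rw [sum_filter, mul_sum]
  refine sum_congr rfl fun r hr => ?_
  have hdvd : m ∣ 2 ^ k * n + r ↔ ((r : ℕ) : ZMod m) = -(2 ^ k * n) := by
    rw [← ZMod.natCast_eq_zero_iff, eq_neg_iff_add_eq_zero, add_comm]
    push_cast
    rfl
  rw [thueMorseSign_two_pow_mul_add n (mem_range.1 hr)]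
  simp only [hdvd, mul_ite, mul_zero]

lemma newmanSum_two_pow_mul_s2 (m k z : ℕ) :
    newmanSum m (2 ^ k * z) = ∑ n ∈ range z, thueMorseSign n *
      ∑ r ∈ range (2 ^ k) with ((r : ℕ) : ZMod m) = -(2 ^ k * n), thueMorseSign r := by
  induction z with
  | zero => simp [newmanSum]
  | succ z ih =>
    rw [sum_range_succ, ← ih, ← sum_range_two_pow_ite_dvd_mul_add, mul_add_one, newmanSum,
      newmanSum, sum_range_add]
    rfl

lemma newmanSum_two_pow_mul_sub_newmanSum (m k : ℕ) {x y : ℕ} (hxy : x ≤ y) :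
    newmanSum m (2 ^ k * y) - newmanSum m (2 ^ k * x) =
      ∑ n ∈ Ico x y, thueMorseSign n *
        ∑ r ∈ range (2 ^ k) with ((r : ℕ) : ZMod m) = -(2 ^ k * n), thueMorseSign r := by
  rw [newmanSum_two_pow_mul_s2, newmanSum_two_pow_mul_s2, sum_Ico_eq_sub _ hxy]

lemma prod_one_sub_primitiveRoots_prime {K : Type*} [CommRing K] [IsDomain K] {p : ℕ}
    [Fact p.Prime] {ζ : K} (hζ : IsPrimitiveRoot ζ p) :
    ∏ μ ∈ primitiveRoots p K, (1 - μ) = p := by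
  have h := congrArg (eval 1) (cyclotomic_eq_prod_X_sub_primitiveRoots hζ)
  rw [eval_one_cyclotomic_prime, eval_prod] at h
  simpa using h.symm

lemma prod_one_sub_pow_pow_of_orderOf_eq {K : Type*} [CommRing K] [IsDomain K] {p q : ℕ}
    [hp : Fact p.Prime] (hq : orderOf (q : ZMod p) = p - 1) {w : K} (hw : w ^ p = 1) :
    ∏ i ∈ range p, (1 - w ^ q ^ i) = p * (1 - w) := by
  rcases eq_or_ne w 1 with rfl | hw1
  · simp [hp.out.ne_zero]
  have hζ : IsPrimitiveRoot w p := orderOf_eq_prime hw hw1 ▸ IsPrimitiveRoot.orderOf w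
  have hqp : (q : ZMod p) ^ (p - 1) = 1 := hq ▸ pow_orderOf_eq_one _
  have hpow : ∀ {a b : ℕ}, w ^ q ^ a = w ^ q ^ b ↔ (q : ZMod p) ^ a = (q : ZMod p) ^ b := by
    intro a b
    rw [(isOfFinOrder_iff_pow_eq_one.2 ⟨p, hp.out.pos, hw⟩).pow_eq_pow_iff_modEq,
      ← hζ.eq_orderOf, ← ZMod.natCast_eq_natCast_iff]
    push_cast
    rfl
  have hlast : w ^ q ^ (p - 1) = w := by
    simpa [hqp] using (hpow (a := p - 1) (b := 0))
  have hcop : ∀ i, (q ^ i).Coprime p := fun i =>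
    (ZMod.isUnit_iff_coprime _ _).1 (by
      push_cast
      exact (IsUnit.of_pow_eq_one hqp (Nat.sub_pos_of_lt hp.out.one_lt).ne').pow i)
  have hmaps : Set.MapsTo (fun i => w ^ q ^ i) (range (p - 1)) (primitiveRoots p K) :=
    fun i _ => (mem_primitiveRoots hp.out.pos).2 (hζ.pow_of_coprime _ (hcop i))
  have hinj : Set.InjOn (fun i => w ^ q ^ i) (range (p - 1)) := fun i hi j hj hij =>
    pow_injOn_Iio_orderOf (x := (q : ZMod p)) (by simpa [hq] using hi) (by simpa [hq] using hj)
      (hpow.1 hij)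
  have hcard : #(primitiveRoots p K) ≤ #(range (p - 1)) := by
    rw [hζ.card_primitiveRoots, Nat.totient_prime hp.out, card_range]
  conv_lhs => rw [← Nat.sub_add_cancel hp.out.one_lt.le, prod_range_succ]
  rw [hlast, prod_nbij _ hmaps hinj (surjOn_of_injOn_of_card_le _ hmaps hinj hcard)
    (fun _ _ => rfl), prod_one_sub_primitiveRoots_prime hζ]

lemma natCast_mul_sum_filter_eq_sum_stdAddChar {p : ℕ} [NeZero p] (c : ℕ → ℂ) (N : ℕ)
    (a : ZMod p) :
    (p : ℂ) * ∑ r ∈ range N with ((r : ℕ) : ZMod p) = a, c r =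
      ∑ t : ZMod p, ZMod.stdAddChar (-(a * t)) *
        ∑ r ∈ range N, c r * ZMod.stdAddChar t ^ r := by
  simp_rw [mul_sum, sum_filter]
  rw [sum_comm]
  refine sum_congr rfl fun r _ => ?_
  have horth := AddChar.sum_mulShift ((r : ZMod p) - a) (ZMod.isPrimitive_stdAddChar p)
  simp only [sub_eq_zero, ZMod.card] at horth
  simp_rw [← AddChar.map_nsmul_eq_pow, mul_left_comm _ (c r), ← mul_sum,
    ← AddChar.map_add_eq_mul, nsmul_eq_mul]
  have hexp : ∀ t : ZMod p, -(a * t) + r * t = t * (r - a) := fun t => by ring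
  simp_rw [hexp, horth]
  split_ifs <;> simp [mul_comm]

lemma sum_filter_natCast_eq_of_forall_pow_eq_one {p : ℕ} [NeZero p] {c d : ℕ → ℂ}
    {M N : ℕ}
    (h : ∀ w : ℂ, w ^ p = 1 → ∑ r ∈ range M, c r * w ^ r = ∑ r ∈ range N, d r * w ^ r)
    (a : ZMod p) :
    ∑ r ∈ range M with ((r : ℕ) : ZMod p) = a, c r =
      ∑ r ∈ range N with ((r : ℕ) : ZMod p) = a, d r := by
  refine mul_left_cancel₀ (Nat.cast_ne_zero.2 (NeZero.ne p)) ?_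
  rw [natCast_mul_sum_filter_eq_sum_stdAddChar, natCast_mul_sum_filter_eq_sum_stdAddChar]
  refine sum_congr rfl fun t _ => ?_
  have hroot : ZMod.stdAddChar t ^ p = 1 := by
    rw [← AddChar.map_nsmul_eq_pow, nsmul_eq_mul, ZMod.natCast_self, zero_mul,
      AddChar.map_zero_eq_one]
  rw [h _ hroot]

lemma sum_filter_thueMorseSign_two_pow_prime {p : ℕ} [Fact p.Prime]
    (h2 : orderOf (2 : ZMod p) = p - 1) (a : ZMod p) :
    ∑ r ∈ range (2 ^ p) with ((r : ℕ) : ZMod p) = a, thueMorseSign r =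
      p * ∑ r ∈ range 2 with ((r : ℕ) : ZMod p) = a, thueMorseSign r := by
  apply Int.cast_injective (α := ℂ)
  push_cast
  rw [mul_sum]
  refine sum_filter_natCast_eq_of_forall_pow_eq_one (fun w hw => ?_) a
  rw [sum_range_two_pow_thueMorseSign_mul_pow, prod_one_sub_pow_pow_of_orderOf_eq
    (by exact_mod_cast h2) hw]
  simp [sum_range_succ, thueMorseSign]
  ring

/-- If 2 is a primitive root of a prime `p`, then
`S_p([2^p x, 2^p y)) = p · S_p([2x, 2y))` for all `x ≤ y`,
where `S_p([a,b)) = S_p(b) - S_p(a)`. -/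
theorem newmanSum_interval_prime_primitiveRoot
    (p : ℕ) (hp : p.Prime) (h2 : orderOf (2 : ZMod p) = p - 1) :
    ∀ x y : ℕ, x ≤ y →
      newmanSum p (2 ^ p * y) - newmanSum p (2 ^ p * x) =
        p * (newmanSum p (2 * y) - newmanSum p (2 * x)) := by
  intro x y hxy
  have := Fact.mk hp
  have hpairs := newmanSum_two_pow_mul_sub_newmanSum p 1 hxy
  simp only [pow_one] at hpairs
  rw [newmanSum_two_pow_mul_sub_newmanSum p p hxy, hpairs, mul_sum]
  refine sum_congr rfl fun n _ => ?_
  rw [ZMod.pow_card, sum_filter_thueMorseSign_two_pow_prime h2]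
  ring
end

section
/- Let p be an odd prime such that 2 is either a primitive root modulo p, or a semiprimitive root of p (i.e., 2 has multiplicative order (p−1)/2 modulo p and 2^x ≡ −1 (mod p) has no solution). Then S_p(x) = O(x^{ln p / ((p−1) ln 2)}); that is, there exists a constant C > 0 such that |S_p(x)| ≤ C · x^{ln p / ((p−1) ln 2)} for all natural numbers x ≥ 1. -/
/-!
Write `f(z, x) = ∑_{n<x} (-1)^{s(n)} z^n`. Averaging `f(ψ t, x)` over `t : ZMod p`, for a
primitive additive character `ψ`, isolates `S_p(x)`, and splitting `n` by parity gives
`f(z, 2y) = (1 - z) f(z², y)`. After `d = ord_p 2` such steps `ψ t` returns to itself, so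
`|f(ψ t, x)| ≤ Q_t |f(ψ t, x / 2^d)| + 2^d` with `Q_t = ∏_{j<d} |1 - ψ t ^ 2^j|`, whence
`f(ψ t, x) = O(x^{log Q_t / (d log 2)})`.

The orbit products `Q_u` over all units `u` multiply to `(∏_{a ≠ 0} |1 - ψ a|)^d = p^d` (the
value of the `p`-th cyclotomic polynomial at `1`). They are invariant under `u ↦ 2u` and, since
`|1 - w⁻¹| = |1 - w|` on the unit circle, under `u ↦ -u`. The hypothesis makes every unit
`±2^j`, so all `Q_u` equal `p^{d/(p-1)}`, which is the claimed exponent.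
-/

open Real

open Finset

theorem Nat.sum_digits_two_two_mul (n : ℕ) :
    (Nat.digits 2 (2 * n)).sum = (Nat.digits 2 n).sum := by
  rcases n.eq_zero_or_pos with rfl | hn
  · simp
  · simp [Nat.digits_def' one_lt_two (by omega : 0 < 2 * n)]

theorem Nat.sum_digits_two_two_mul_add_one (n : ℕ) :
    (Nat.digits 2 (2 * n + 1)).sum = (Nat.digits 2 n).sum + 1 := by
  rw [Nat.digits_def' one_lt_two (by omega), List.sum_cons, add_comm,
    show (2 * n + 1) % 2 = 1 by omega, show (2 * n + 1) / 2 = n by omega]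

section ThueMorse

variable {R : Type*}

def thueMorseSum [CommRing R] (z : R) (x : ℕ) : R :=
  ∑ n ∈ range x, (-1) ^ (Nat.digits 2 n).sum * z ^ n

theorem thueMorseSum_succ [CommRing R] (z : R) (x : ℕ) :
    thueMorseSum z (x + 1) = thueMorseSum z x + (-1) ^ (Nat.digits 2 x).sum * z ^ x :=
  sum_range_succ _ _

theorem thueMorseSum_two_mul [CommRing R] (z : R) (y : ℕ) :
    thueMorseSum z (2 * y) = (1 - z) * thueMorseSum (z ^ 2) y := by
  induction y with
  | zero => simp [thueMorseSum]
  | succ y ih =>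
    rw [show 2 * (y + 1) = 2 * y + 1 + 1 by ring, thueMorseSum_succ, thueMorseSum_succ, ih,
      thueMorseSum_succ, Nat.sum_digits_two_two_mul, Nat.sum_digits_two_two_mul_add_one]
    ring

variable [NormedCommRing R] {z : R}

def squaringOrbitProd (z : R) (k : ℕ) : ℝ :=
  ∏ j ∈ range k, ‖1 - z ^ 2 ^ j‖

theorem squaringOrbitProd_succ (z : R) (k : ℕ) :
    squaringOrbitProd z (k + 1) = ‖1 - z‖ * squaringOrbitProd (z ^ 2) k := by
  simp only [squaringOrbitProd, prod_range_succ', ← pow_mul, ← pow_succ', pow_zero, pow_one]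
  ring

theorem squaringOrbitProd_sq {d : ℕ} (hz : z ^ 2 ^ d = z) :
    squaringOrbitProd (z ^ 2) d = squaringOrbitProd z d := by
  have hback : squaringOrbitProd z (d + 1) = squaringOrbitProd z d * ‖1 - z‖ := by
    rw [squaringOrbitProd, prod_range_succ, hz, ← squaringOrbitProd]
  rw [squaringOrbitProd_succ, mul_comm] at hback
  rcases eq_or_ne z 1 with rfl | hz1
  · rw [one_pow]
  · exact mul_right_cancel₀ (norm_ne_zero_iff.2 (sub_ne_zero.2 hz1.symm)) hback

theorem squaringOrbitProd_pow_two_pow {d : ℕ} (hz : z ^ 2 ^ d = z) (j : ℕ) :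
    squaringOrbitProd (z ^ 2 ^ j) d = squaringOrbitProd z d := by
  induction j with
  | zero => rw [pow_zero, pow_one]
  | succ j ih =>
    rw [pow_succ, pow_mul, squaringOrbitProd_sq, ih]
    rw [← pow_mul, mul_comm, pow_mul, hz]

variable [NormOneClass R]

theorem norm_one_sub_le_two (hz : ‖z‖ ≤ 1) : ‖1 - z‖ ≤ 2 := by
  linarith [norm_sub_le (1 : R) z, norm_one (α := R)]

theorem norm_thueMorseSum_term_le (hz : ‖z‖ ≤ 1) (n : ℕ) :
    ‖(-1 : R) ^ (Nat.digits 2 n).sum * z ^ n‖ ≤ 1 := by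
  calc _ ≤ ‖(-1 : R) ^ (Nat.digits 2 n).sum‖ * ‖z ^ n‖ := norm_mul_le _ _
    _ ≤ 1 * 1 := by
      gcongr
      · exact (norm_pow_le _ _).trans (by simp)
      · exact (norm_pow_le z n).trans (pow_le_one₀ (norm_nonneg z) hz)
    _ = 1 := one_mul 1

theorem norm_thueMorseSum_le (hz : ‖z‖ ≤ 1) (x : ℕ) : ‖thueMorseSum z x‖ ≤ x := by
  calc _ ≤ ∑ n ∈ range x, ‖(-1 : R) ^ (Nat.digits 2 n).sum * z ^ n‖ := norm_sum_le _ _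
    _ ≤ ∑ n ∈ range x, 1 := sum_le_sum fun n _ ↦ norm_thueMorseSum_term_le hz n
    _ = x := by simp

theorem norm_thueMorseSum_le_div_two (hz : ‖z‖ ≤ 1) (x : ℕ) :
    ‖thueMorseSum z x‖ ≤ ‖1 - z‖ * ‖thueMorseSum (z ^ 2) (x / 2)‖ + 1 := by
  have hhalf :
      ‖thueMorseSum z (2 * (x / 2))‖ ≤ ‖1 - z‖ * ‖thueMorseSum (z ^ 2) (x / 2)‖ := by
    rw [thueMorseSum_two_mul]
    exact norm_mul_le _ _
  rcases Nat.even_or_odd' x with ⟨y, rfl | rfl⟩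
  · rw [Nat.mul_div_cancel_left y two_pos] at hhalf ⊢
    linarith
  · rw [show (2 * y + 1) / 2 = y by omega] at hhalf ⊢
    rw [thueMorseSum_succ]
    linarith [norm_thueMorseSum_term_le hz (2 * y),
      norm_add_le (thueMorseSum z (2 * y)) ((-1) ^ (Nat.digits 2 (2 * y)).sum * z ^ (2 * y))]

theorem norm_thueMorseSum_le_div_two_pow (hz : ‖z‖ ≤ 1) (k x : ℕ) :
    ‖thueMorseSum z x‖ ≤
      squaringOrbitProd z k * ‖thueMorseSum (z ^ 2 ^ k) (x / 2 ^ k)‖ + (2 ^ k - 1) := by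
  induction k generalizing z x with
  | zero => simp [squaringOrbitProd]
  | succ k ih =>
    have hz2 : ‖z ^ 2‖ ≤ 1 := (norm_pow_le z 2).trans (pow_le_one₀ (norm_nonneg z) hz)
    have hrest := ih hz2 (x / 2)
    rw [← pow_mul, ← pow_succ', Nat.div_div_eq_div_mul, ← pow_succ'] at hrest
    have h1z := norm_one_sub_le_two hz
    have hP : 0 ≤ squaringOrbitProd (z ^ 2) k := prod_nonneg fun _ _ ↦ norm_nonneg _
    calc ‖thueMorseSum z x‖ ≤ ‖1 - z‖ * ‖thueMorseSum (z ^ 2) (x / 2)‖ + 1 :=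
          norm_thueMorseSum_le_div_two hz x
      _ ≤ ‖1 - z‖ * (squaringOrbitProd (z ^ 2) k *
            ‖thueMorseSum (z ^ 2 ^ (k + 1)) (x / 2 ^ (k + 1))‖ + (2 ^ k - 1)) + 1 := by
          gcongr
      _ ≤ _ := by
          rw [squaringOrbitProd_succ, pow_succ (2 : ℝ) k]
          nlinarith [one_le_pow₀ (n := k) (one_le_two (α := ℝ))]

end ThueMorse

theorem squaringOrbitProd_inv {K : Type*} [NormedField K] {z : K} (hz : ‖z‖ = 1) (d : ℕ) :
    squaringOrbitProd z⁻¹ d = squaringOrbitProd z d := by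
  refine prod_congr rfl fun j _ ↦ ?_
  have hw : ‖z ^ 2 ^ j‖ = 1 := by rw [norm_pow, hz, one_pow]
  have hw0 : z ^ 2 ^ j ≠ 0 := norm_ne_zero_iff.1 (by rw [hw]; exact one_ne_zero)
  rw [inv_pow, show 1 - (z ^ 2 ^ j)⁻¹ = (z ^ 2 ^ j)⁻¹ * (z ^ 2 ^ j - 1) by field_simp,
    norm_mul, norm_inv, hw, inv_one, one_mul, norm_sub_rev]

theorem le_mul_rpow_of_le_rpow_mul_div {g : ℕ → ℝ} {b : ℕ} {α c B : ℝ} (hb : 1 < b)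
    (hα : 0 < α) (hc : 0 ≤ c) (hB : 0 ≤ B) (hbase : ∀ x < b, g x ≤ B)
    (hrec : ∀ x, g x ≤ (b : ℝ) ^ α * g (x / b) + c) {x : ℕ} (hx : 1 ≤ x) :
    g x ≤ (B + c / ((b : ℝ) ^ α - 1)) * (x : ℝ) ^ α := by
  set q := (b : ℝ) ^ α
  set D := c / (q - 1)
  have hq : 1 < q := Real.one_lt_rpow (by exact_mod_cast hb) hα
  have hD : 0 ≤ D := div_nonneg hc (by linarith)
  have hqD : (q - 1) * D = c := mul_div_cancel₀ c (by linarith)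
  -- `-D` is the fixed point of `y ↦ q * y + c`, which makes this sharper bound inductive.
  suffices ∀ x, 1 ≤ x → g x ≤ (B + D) * (x : ℝ) ^ α - D by linarith [this x hx]
  intro x hx
  induction x using Nat.strong_induction_on with
  | _ x ih =>
    have hxα : 1 ≤ (x : ℝ) ^ α := Real.one_le_rpow (by exact_mod_cast hx) hα.le
    rcases lt_or_ge x b with hxb | hbx
    · nlinarith [hbase x hxb]
    · have hy := ih (x / b) (Nat.div_lt_self hx hb) ((Nat.one_le_div_iff (by omega)).2 hbx)
      have hyα : q * ((x / b : ℕ) : ℝ) ^ α ≤ (x : ℝ) ^ α := by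
        calc q * ((x / b : ℕ) : ℝ) ^ α ≤ q * ((x : ℝ) / b) ^ α := by
              gcongr
              exact Nat.cast_div_le
          _ = (x : ℝ) ^ α := by
              rw [Real.div_rpow (by positivity) (by positivity),
                mul_div_cancel₀ _ (by positivity)]
      calc g x ≤ q * g (x / b) + c := hrec x
        _ ≤ q * ((B + D) * ((x / b : ℕ) : ℝ) ^ α - D) + c := by gcongr
        _ ≤ (B + D) * (x : ℝ) ^ α - D := by nlinarith

theorem eq_rpow_log_div_of_pow_eq {P a b : ℝ} {n d : ℕ} (hn : n ≠ 0) (ha : 0 < a) (hb : 0 < b)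
    (hb1 : b ≠ 1) (hP : 0 ≤ P) (h : P ^ n = a ^ d) :
    P = (b ^ d) ^ (Real.log a / (n * Real.log b)) := by
  have hP0 : 0 < P := by
    refine hP.lt_of_ne fun hP0 ↦ ?_
    rw [← hP0, zero_pow hn] at h
    exact (pow_pos ha d).ne h
  have hlog : n * Real.log P = d * Real.log a := by rw [← Real.log_pow, h, Real.log_pow]
  have hlogb : Real.log b ≠ 0 := Real.log_ne_zero_of_pos_of_ne_one hb hb1
  rw [Real.rpow_def_of_pos (by positivity), Real.log_pow, ← Real.exp_log hP0]
  congr 1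
  field_simp
  linear_combination hlog

section ZModCharacters

variable {p : ℕ} [Fact p.Prime]

theorem prod_units_one_sub_addChar {K : Type*} [CommRing K] [IsDomain K]
    {ψ : AddChar (ZMod p) K} (hψ : ψ.IsPrimitive) : ∏ u : (ZMod p)ˣ, (1 - ψ u) = p := by
  classical
  have hp := (Fact.out : p.Prime)
  have hprim (u : (ZMod p)ˣ) : IsPrimitiveRoot (ψ u) p := by
    refine isPrimitiveRoot_of_mem_nthRootsFinset hp ?_ ?_
    · rw [Polynomial.mem_nthRootsFinset hp.pos, ← AddChar.map_nsmul_eq_pow, nsmul_eq_mul,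
        ZMod.natCast_self, zero_mul, AddChar.map_zero_eq_one]
    · rw [Ne, hψ.zmod_char_eq_one_iff]
      exact u.ne_zero
  have hinj : Function.Injective fun u : (ZMod p)ˣ ↦ ψ u := by
    intro u v huv
    have h1 : ψ 1 ^ (u : ZMod p).val = ψ 1 ^ (v : ZMod p).val := by
      simpa only [← AddChar.map_nsmul_eq_pow, nsmul_one, ZMod.natCast_zmod_val] using huv
    exact Units.ext (ZMod.val_injective p
      ((hprim 1).pow_inj (ZMod.val_lt _) (ZMod.val_lt _) h1))
  have himage : univ.image (fun u : (ZMod p)ˣ ↦ ψ u) = primitiveRoots p K := by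
    refine eq_of_subset_of_card_le (fun z hz ↦ ?_) ?_
    · obtain ⟨u, -, rfl⟩ := mem_image.1 hz
      exact (mem_primitiveRoots hp.pos).2 (hprim u)
    · rw [(hprim 1).card_primitiveRoots, card_image_of_injective _ hinj, card_univ,
        ZMod.card_units, Nat.totient_prime hp]
  have hcyc := congrArg (Polynomial.eval 1)
    (Polynomial.cyclotomic_eq_prod_X_sub_primitiveRoots (hprim 1))
  rw [Polynomial.eval_one_cyclotomic_prime, Polynomial.eval_prod, ← himage,
    prod_image hinj.injOn] at hcyc
  simpa using hcyc.symm

theorem prod_units_squaringOrbitProd_addChar {ψ : AddChar (ZMod p) ℂ} (hψ : ψ.IsPrimitive)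
    (h2 : IsUnit (2 : ZMod p)) (d : ℕ) :
    ∏ u : (ZMod p)ˣ, squaringOrbitProd (ψ u) d = (p : ℝ) ^ d := by
  obtain ⟨v, hv⟩ := h2
  have hnorm : ∏ u : (ZMod p)ˣ, ‖1 - ψ u‖ = p := by
    rw [← norm_prod, prod_units_one_sub_addChar hψ, Complex.norm_natCast]
  have hshift (j : ℕ) (u : (ZMod p)ˣ) : ψ u ^ 2 ^ j = ψ ↑(v ^ j * u) := by
    rw [← AddChar.map_nsmul_eq_pow, nsmul_eq_mul, Units.val_mul, Units.val_pow_eq_pow_val, hv]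
    push_cast
    rfl
  simp only [squaringOrbitProd]
  rw [prod_comm]
  calc ∏ j ∈ range d, ∏ u : (ZMod p)ˣ, ‖1 - ψ u ^ 2 ^ j‖
      = ∏ j ∈ range d, (p : ℝ) := by
        refine prod_congr rfl fun j _ ↦ ?_
        simp only [hshift]
        exact (Equiv.prod_comp (Equiv.mulLeft (v ^ j)) fun u : (ZMod p)ˣ ↦ ‖1 - ψ u‖).trans
          hnorm
    _ = (p : ℝ) ^ d := by rw [prod_const, card_range]

end ZModCharacters

theorem sum_thueMorseSum_addChar {m : ℕ} [NeZero m] {K : Type*} [CommRing K] [IsDomain K]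
    {ψ : AddChar (ZMod m) K} (hψ : ψ.IsPrimitive) (x : ℕ) :
    ∑ t, thueMorseSum (ψ t) x = m * newmanSum m x := by
  classical
  simp only [thueMorseSum, newmanSum]
  rw [sum_comm]
  push_cast
  rw [mul_sum]
  refine sum_congr rfl fun n _ ↦ ?_
  simp only [← AddChar.map_nsmul_eq_pow, nsmul_eq_mul, ← mul_sum, mul_comm (n : ZMod m),
    AddChar.sum_mulShift _ hψ, ZMod.natCast_eq_zero_iff, ZMod.card]
  split_ifs <;> ring

def IsSemiprimitiveRoot {p : ℕ} (a : ZMod p) : Prop :=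
  orderOf a = (p - 1) / 2 ∧ ¬ ∃ x : ℕ, a ^ x = -1

section TwoPrimitiveOrSemiprimitive

variable {p : ℕ} [Fact p.Prime]
  (h : orderOf (2 : ZMod p) = p - 1 ∨ IsSemiprimitiveRoot (2 : ZMod p))
include h

theorem orderOf_two_pos : 0 < orderOf (2 : ZMod p) := by
  have hp := (Fact.out : p.Prime)
  rcases h with h | ⟨h, hno⟩ <;> rw [h]
  · exact Nat.sub_pos_of_lt hp.one_lt
  · rcases hp.eq_two_or_odd' with rfl | ⟨k, rfl⟩
    · -- in `ZMod 2`, `2 ^ 0 = 1 = -1`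
      exact absurd ⟨0, by rw [pow_zero]; rfl⟩ hno
    · have := hp.two_le
      omega

theorem exists_eq_two_pow_or_eq_neg_two_pow (u : (ZMod p)ˣ) :
    ∃ j : ℕ, (u : ZMod p) = 2 ^ j ∨ (u : ZMod p) = -2 ^ j := by
  have hd := orderOf_two_pos h
  obtain ⟨g, hg⟩ : IsUnit (2 : ZMod p) := (orderOf_pos_iff.1 hd).isUnit
  set H := Subgroup.zpowers g
  have hmem (w : (ZMod p)ˣ) (hw : w ∈ H) : ∃ j : ℕ, (w : ZMod p) = 2 ^ j := by
    obtain ⟨j, rfl⟩ := Submonoid.mem_powers_iff _ _ |>.1 (mem_powers_iff_mem_zpowers.2 hw)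
    exact ⟨j, by rw [Units.val_pow_eq_pow_val, hg]⟩
  have hcard : orderOf (2 : ZMod p) * H.index = p - 1 := by
    rw [← hg, orderOf_units, ← Nat.card_zpowers, Subgroup.card_mul_index,
      Nat.card_eq_fintype_card, ZMod.card_units]
  rcases h with h | ⟨h, hno⟩
  · have hidx : H.index = 1 := by
      rw [h] at hcard hd
      exact (Nat.mul_eq_left hd.ne').1 hcard
    obtain ⟨j, hj⟩ := hmem u (Subgroup.index_eq_one.1 hidx ▸ Subgroup.mem_top u)
    exact ⟨j, Or.inl hj⟩
  · have hidx : H.index = 2 := by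
      rw [h] at hcard hd
      refine Nat.eq_of_mul_eq_mul_left hd (hcard.trans ?_)
      rcases (Fact.out : p.Prime).eq_two_or_odd' with rfl | ⟨k, rfl⟩ <;> omega
    have hneg : (-1 : (ZMod p)ˣ) ∉ H := fun hm ↦ hno <| by
      obtain ⟨j, hj⟩ := hmem _ hm
      exact ⟨j, by rw [← hj, Units.val_neg, Units.val_one]⟩
    by_cases hu : u ∈ H
    · obtain ⟨j, hj⟩ := hmem u hu
      exact ⟨j, Or.inl hj⟩
    · have hneg_u : -1 * u ∈ H :=
        (Subgroup.mul_mem_iff_of_index_two hidx).2 (iff_of_false hneg hu)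
      obtain ⟨j, hj⟩ := hmem _ hneg_u
      refine ⟨j, Or.inr ?_⟩
      rw [← hj]
      simp

variable {ψ : AddChar (ZMod p) ℂ}

theorem squaringOrbitProd_addChar_units_eq (u : (ZMod p)ˣ) :
    squaringOrbitProd (ψ u) (orderOf (2 : ZMod p)) =
      squaringOrbitProd (ψ 1) (orderOf (2 : ZMod p)) := by
  have hpow (j : ℕ) : ψ (2 ^ j) = ψ 1 ^ 2 ^ j := by
    rw [← AddChar.map_nsmul_eq_pow, nsmul_one]
    push_cast
    rfl
  have hfix : ψ 1 ^ 2 ^ orderOf (2 : ZMod p) = ψ 1 := by rw [← hpow, pow_orderOf_eq_one]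
  obtain ⟨j, hj | hj⟩ := exists_eq_two_pow_or_eq_neg_two_pow h u <;> rw [hj]
  · rw [hpow, squaringOrbitProd_pow_two_pow hfix]
  · rw [AddChar.map_neg_eq_inv, squaringOrbitProd_inv (AddChar.norm_apply ψ _), hpow,
      squaringOrbitProd_pow_two_pow hfix]

theorem squaringOrbitProd_addChar_pow_eq (hψ : ψ.IsPrimitive) (u : (ZMod p)ˣ) :
    squaringOrbitProd (ψ u) (orderOf (2 : ZMod p)) ^ (p - 1) =
      (p : ℝ) ^ orderOf (2 : ZMod p) := by
  have h2 : IsUnit (2 : ZMod p) := (orderOf_pos_iff.1 (orderOf_two_pos h)).isUnit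
  rw [← prod_units_squaringOrbitProd_addChar hψ h2, ← ZMod.card_units p, ← card_univ,
    ← prod_const]
  exact prod_congr rfl fun v _ ↦ by
    rw [squaringOrbitProd_addChar_units_eq h, squaringOrbitProd_addChar_units_eq h]

theorem squaringOrbitProd_addChar_le (hψ : ψ.IsPrimitive) (t : ZMod p) :
    squaringOrbitProd (ψ t) (orderOf (2 : ZMod p)) ≤
      ((2 : ℝ) ^ orderOf (2 : ZMod p)) ^ (Real.log p / ((p - 1) * Real.log 2)) := by
  have hp := (Fact.out : p.Prime)
  rcases eq_or_ne t 0 with rfl | ht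
  · rw [AddChar.map_zero_eq_one, squaringOrbitProd,
      prod_eq_zero (mem_range.2 (orderOf_two_pos h)) (by rw [one_pow, sub_self, norm_zero])]
    positivity
  · refine (eq_rpow_log_div_of_pow_eq (Nat.sub_ne_zero_of_lt hp.one_lt) (by exact_mod_cast hp.pos)
      two_pos (by norm_num) (prod_nonneg fun _ _ ↦ norm_nonneg _)
      (squaringOrbitProd_addChar_pow_eq h hψ (Units.mk0 t ht))).le.trans_eq ?_
    rw [Nat.cast_pred hp.pos]

theorem norm_thueMorseSum_addChar_le (hψ : ψ.IsPrimitive) (t : ZMod p) (x : ℕ) :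
    ‖thueMorseSum (ψ t) x‖ ≤
      ((2 ^ orderOf (2 : ZMod p) : ℕ) : ℝ) ^ (Real.log p / ((p - 1) * Real.log 2)) *
        ‖thueMorseSum (ψ t) (x / 2 ^ orderOf (2 : ZMod p))‖ +
          (2 ^ orderOf (2 : ZMod p) - 1) := by
  have hfix : ψ t ^ 2 ^ orderOf (2 : ZMod p) = ψ t := by
    rw [← AddChar.map_nsmul_eq_pow, nsmul_eq_mul]
    push_cast
    rw [pow_orderOf_eq_one, one_mul]
  have hrec := norm_thueMorseSum_le_div_two_pow (AddChar.norm_apply ψ t).le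
    (orderOf (2 : ZMod p)) x
  rw [hfix] at hrec
  push_cast
  exact hrec.trans (by gcongr; exact squaringOrbitProd_addChar_le h hψ t)

theorem exists_norm_thueMorseSum_addChar_le (hψ : ψ.IsPrimitive) :
    ∃ C : ℝ, 0 < C ∧ ∀ (t : ZMod p) (x : ℕ), 1 ≤ x →
      ‖thueMorseSum (ψ t) x‖ ≤ C * (x : ℝ) ^ (Real.log p / ((p - 1) * Real.log 2)) := by
  have hp := (Fact.out : p.Prime)
  set d := orderOf (2 : ZMod p)
  set α := Real.log p / ((p - 1) * Real.log 2)
  have hd : 1 < 2 ^ d := Nat.one_lt_two_pow (orderOf_two_pos h).ne'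
  have hp1 : (1 : ℝ) < p := by exact_mod_cast hp.one_lt
  have hα : 0 < α :=
    div_pos (Real.log_pos hp1) (mul_pos (by linarith) (Real.log_pos one_lt_two))
  have hc : (0 : ℝ) ≤ 2 ^ d - 1 := by linarith [one_le_pow₀ (n := d) (one_le_two (α := ℝ))]
  have hq : (1 : ℝ) < ((2 ^ d : ℕ) : ℝ) ^ α := Real.one_lt_rpow (by exact_mod_cast hd) hα
  refine ⟨2 ^ d + (2 ^ d - 1) / (((2 ^ d : ℕ) : ℝ) ^ α - 1),
    add_pos_of_pos_of_nonneg (by positivity) (div_nonneg hc (by linarith)),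
    fun t x hx ↦ le_mul_rpow_of_le_rpow_mul_div hd hα hc (by positivity) (fun y hy ↦ ?_)
      (norm_thueMorseSum_addChar_le h hψ t) hx⟩
  exact (norm_thueMorseSum_le (AddChar.norm_apply ψ t).le y).trans (by exact_mod_cast hy.le)

end TwoPrimitiveOrSemiprimitive

theorem newmanSum_isBigO_general
    (p : ℕ) (hp : p.Prime)
    (h : orderOf (2 : ZMod p) = p - 1 ∨
      (orderOf (2 : ZMod p) = (p - 1) / 2 ∧ ¬ ∃ x : ℕ, (2 : ZMod p) ^ x = -1)) :
    ∃ C : ℝ, 0 < C ∧ ∀ x : ℕ, 1 ≤ x →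
      |(newmanSum p x : ℝ)| ≤ C * (x : ℝ) ^ (Real.log p / ((p - 1) * Real.log 2)) := by
  have := Fact.mk hp
  set α := Real.log p / ((p - 1) * Real.log 2)
  have hψ := ZMod.isPrimitive_stdAddChar p
  obtain ⟨C, hC, hF⟩ := exists_norm_thueMorseSum_addChar_le h hψ
  refine ⟨C, hC, fun x hx ↦ le_of_mul_le_mul_left ?_ (Nat.cast_pos.2 hp.pos : (0 : ℝ) < p)⟩
  have hsum := congrArg norm (sum_thueMorseSum_addChar hψ x)
  rw [norm_mul, Complex.norm_natCast, Complex.norm_intCast] at hsum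
  calc (p : ℝ) * |(newmanSum p x : ℝ)| ≤ ∑ t, ‖thueMorseSum (ZMod.stdAddChar t) x‖ :=
        hsum ▸ norm_sum_le _ _
    _ ≤ ∑ _t : ZMod p, C * (x : ℝ) ^ α := sum_le_sum fun t _ ↦ hF t x hx
    _ = p * (C * (x : ℝ) ^ α) := by rw [sum_const, card_univ, ZMod.card, nsmul_eq_mul]

/-- If 2 is a primitive or a semiprimitive root of an odd prime `p`, then
`S_p(x) = O(x^{ln p / ((p-1) ln 2)})`. -/
theorem newmanSum_isBigO
    (p : ℕ) (hp : p.Prime) (hodd : Odd p)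
    (h : orderOf (2 : ZMod p) = p - 1 ∨
      (orderOf (2 : ZMod p) = (p - 1) / 2 ∧ ¬ ∃ x : ℕ, (2 : ZMod p) ^ x = -1)) :
    ∃ C : ℝ, 0 < C ∧ ∀ x : ℕ, 1 ≤ x →
      |(newmanSum p x : ℝ)| ≤ C * (x : ℝ) ^ (Real.log p / ((p - 1) * Real.log 2)) :=
  newmanSum_isBigO_general p hp h
end

section
/- Let p be a prime such that 2 is a primitive root modulo p. Then S_p(2^p) = p. -/
/-!
Writing `ε(n) = (-1)^σ(n)`, the generating polynomial `∑_{n < 2^k} ε(n) z^n` factors as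
`∏_{i < k} (1 - z^(2^i))`. Filtering the multiples of `p` with a primitive `p`-th root of unity
`ζ` gives `p · S_p(2^p) = ∑_{j < p} ∏_{i < p} (1 - ζ^(j 2^i))`. When 2 generates `(ZMod p)ˣ`,
the exponents `2^i j` with `i < p - 1` run over all nonzero residues for `p ∤ j`, so the first
`p - 1` factors multiply to `Φ_p(1) = p`, while the last one is `1 - ζ^j` as
`2^(p-1) ≡ 1 [MOD p]`. Summing `p (1 - ζ^j)` over `j` gives `p²`.
-/

open Finset Polynomial

theorem Nat.digits_sum_two_pow_add {k n : ℕ} (h : n < 2 ^ k) :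
    (Nat.digits 2 (2 ^ k + n)).sum = (Nat.digits 2 n).sum + 1 := by
  have hlen := (Nat.digits_length_le_iff one_lt_two n).2 h
  have := Nat.digits_append_zeroes_append_digits (k := k - (Nat.digits 2 n).length) (n := n)
    one_lt_two one_pos
  rw [Nat.add_sub_cancel' hlen, mul_one, add_comm] at this
  rw [← this]
  simp

theorem sum_range_two_pow_neg_one_pow_digits_sum_mul_pow {R : Type*} [CommRing R] (z : R)
    (k : ℕ) :
    ∑ n ∈ range (2 ^ k), (-1 : R) ^ (Nat.digits 2 n).sum * z ^ n =
      ∏ i ∈ range k, (1 - z ^ 2 ^ i) := by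
  induction k with
  | zero => simp
  | succ k ih =>
    have hshift : ∀ n ∈ range (2 ^ k),
        (-1 : R) ^ (Nat.digits 2 (2 ^ k + n)).sum * z ^ (2 ^ k + n) =
          -z ^ 2 ^ k * ((-1) ^ (Nat.digits 2 n).sum * z ^ n) := by
      intro n hn
      rw [Nat.digits_sum_two_pow_add (mem_range.1 hn), pow_succ, pow_add]
      ring
    rw [pow_succ, mul_two, sum_range_add, prod_range_succ, ← ih, sum_congr rfl hshift,
      ← mul_sum]
    ring

theorem Nat.coprime_of_orderOf_natCast_ne_zero {q n : ℕ} (h : orderOf (q : ZMod n) ≠ 0) :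
    q.Coprime n :=
  (ZMod.isUnit_iff_coprime q n).1 (orderOf_pos_iff.1 (Nat.pos_of_ne_zero h)).isUnit

namespace IsPrimitiveRoot

section CommMonoid

variable {M : Type*} [CommMonoid M] {η : M} {n : ℕ}

theorem pow_eq_pow_iff_modEq (hη : IsPrimitiveRoot η n) (hn : n ≠ 0) {a b : ℕ} :
    η ^ a = η ^ b ↔ a ≡ b [MOD n] := by
  rw [(hη.isOfFinOrder hn).pow_eq_pow_iff_modEq, ← hη.eq_orderOf]

theorem injOn_pow_pow (hη : IsPrimitiveRoot η n) (hn : n ≠ 0) (q : ℕ) :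
    Set.InjOn (fun i => η ^ q ^ i) (range (orderOf (q : ZMod n))) := by
  intro a ha b hb hab
  have hmod : (q : ZMod n) ^ a = (q : ZMod n) ^ b := by
    exact_mod_cast
      (ZMod.natCast_eq_natCast_iff _ _ _).2 ((hη.pow_eq_pow_iff_modEq hn).1 hab)
  exact pow_injOn_Iio_orderOf (mem_range.1 ha) (mem_range.1 hb) hmod

end CommMonoid

variable {K : Type*} [CommRing K] [IsDomain K] {ζ η : K} {m p q : ℕ}

theorem sum_pow_pow_eq_ite (hζ : IsPrimitiveRoot ζ m) (n : ℕ) :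
    ∑ j ∈ range m, (ζ ^ j) ^ n = if m ∣ n then (m : K) else 0 := by
  simp_rw [← pow_mul, mul_comm _ n, pow_mul]
  split_ifs with hn
  · simp [(hζ.pow_eq_one_iff_dvd n).2 hn]
  · have hne : ζ ^ n ≠ 1 := mt (hζ.pow_eq_one_iff_dvd n).1 hn
    refine eq_zero_of_ne_zero_of_mul_left_eq_zero (sub_ne_zero_of_ne hne.symm) ?_
    rw [mul_neg_geom_sum, ← pow_mul, mul_comm, pow_mul, hζ.pow_eq_one, one_pow, sub_self]

theorem natCast_mul_newmanSum_two_pow (hζ : IsPrimitiveRoot ζ m) (k : ℕ) :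
    (m : K) * newmanSum m (2 ^ k) = ∑ j ∈ range m, ∏ i ∈ range k, (1 - (ζ ^ j) ^ 2 ^ i) := by
  simp_rw [← sum_range_two_pow_neg_one_pow_digits_sum_mul_pow, newmanSum]
  push_cast
  rw [sum_comm, mul_sum]
  refine sum_congr rfl fun n _ => ?_
  rw [← mul_sum, hζ.sum_pow_pow_eq_ite]
  split_ifs <;> ring

theorem image_pow_pow_eq_primitiveRoots [DecidableEq K] (hp : p.Prime)
    (hq : orderOf (q : ZMod p) = p - 1) (hη : IsPrimitiveRoot η p) :
    (range (p - 1)).image (fun i => η ^ q ^ i) = primitiveRoots p K := by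
  have hinj := hq ▸ hη.injOn_pow_pow hp.ne_zero q
  refine eq_of_subset_of_card_le (fun μ hμ => ?_) ?_
  · obtain ⟨i, -, rfl⟩ := mem_image.1 hμ
    rw [mem_primitiveRoots hp.pos]
    refine hη.pow_of_coprime _ (Nat.Coprime.pow_left i ?_)
    exact Nat.coprime_of_orderOf_natCast_ne_zero (hq ▸ Nat.sub_ne_zero_of_lt hp.one_lt)
  · rw [hη.card_primitiveRoots, Nat.totient_prime hp, card_image_of_injOn hinj, card_range]

theorem prod_one_sub_pow_pow_eq (hp : p.Prime) (hq : orderOf (q : ZMod p) = p - 1)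
    (hη : IsPrimitiveRoot η p) :
    ∏ i ∈ range (p - 1), (1 - η ^ q ^ i) = (p : K) := by
  classical
  have := Fact.mk hp
  rw [← eval_one_cyclotomic_prime (R := K), cyclotomic_eq_prod_X_sub_primitiveRoots hη,
    ← hη.image_pow_pow_eq_primitiveRoots hp hq,
    prod_image (hq ▸ hη.injOn_pow_pow hp.ne_zero q)]
  simp [eval_prod]

theorem prod_range_one_sub_pow_pow_eq_mul (hp : p.Prime) (hq : orderOf (q : ZMod p) = p - 1)
    (hζ : IsPrimitiveRoot ζ p) (j : ℕ) :
    ∏ i ∈ range p, (1 - (ζ ^ j) ^ q ^ i) = p * (1 - ζ ^ j) := by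
  by_cases hj : p ∣ j
  · simp [(hζ.pow_eq_one_iff_dvd j).2 hj, hp.ne_zero]
  have hη := hζ.pow_of_coprime j (hp.coprime_iff_not_dvd.2 hj).symm
  have hq_pow : q ^ (p - 1) ≡ 1 [MOD p] := by
    rw [← ZMod.natCast_eq_natCast_iff]
    push_cast
    rw [← hq, pow_orderOf_eq_one]
  conv_lhs => rw [← Nat.sub_add_cancel hp.one_le]
  rw [prod_range_succ, hη.prod_one_sub_pow_pow_eq hp hq,
    (hη.pow_eq_pow_iff_modEq hp.ne_zero).2 hq_pow, pow_one]

end IsPrimitiveRoot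

/-- If 2 is a primitive root of a prime `p`, then `S_p(2^p) = p`. -/
theorem newmanSum_pow_self (p : ℕ) (hp : p.Prime) (h2 : orderOf (2 : ZMod p) = p - 1) :
    newmanSum p (2 ^ p) = p := by
  have hζ := Complex.isPrimitiveRoot_exp p hp.ne_zero
  have hq : orderOf ((2 : ℕ) : ZMod p) = p - 1 := by exact_mod_cast h2
  have key : (p : ℂ) * newmanSum p (2 ^ p) = p * p := by
    rw [hζ.natCast_mul_newmanSum_two_pow,
      sum_congr rfl fun j _ => hζ.prod_range_one_sub_pow_pow_eq_mul hp hq j, ← mul_sum,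
      sum_sub_distrib, hζ.geom_sum_eq_zero hp.one_lt]
    simp
  exact_mod_cast mul_left_cancel₀ (Nat.cast_ne_zero.2 hp.ne_zero) key
end

section
/- Let p be an odd prime such that 2 is a semiprimitive root of p, i.e., 2 has multiplicative order (p−1)/2 modulo p and the congruence 2^x ≡ −1 (mod p) has no solution, and let ω be any primitive p-th root of unity in the complex numbers. Then ∏_{j=1}^{(p−1)/2} (1 − ω^{2^j})^2 = (−1)^{(p−1)/2} · p. -/
/-!
The powers of `2` form a subgroup `H` of index two in `(ℤ/p)ˣ` that does not contain `-1`, so `H`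
and `-H` partition the nonzero residues. Put `P = ∏_{h ∈ H} (1 - ω^h)`. Since
`1 - ω^{-h} = -ω^{-h} (1 - ω^h)` and `∑_{h ∈ H} h = 0`, the product over `-H` is `(-1)^|H| P`, hence
`p = ∏_{a ≠ 0} (1 - ω^a) = (-1)^((p-1)/2) P²`.
-/

open Finset
open scoped Pointwise

namespace AddChar

variable {G R : Type*} [CommRing R]

theorem map_sum_eq_prod {ι : Type*} [AddCommMonoid G] (ψ : AddChar G R) (s : Finset ι)
    (f : ι → G) : ψ (∑ i ∈ s, f i) = ∏ i ∈ s, ψ (f i) := by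
  classical
  induction s using Finset.induction_on with
  | empty => simp
  | insert i s hi ih => rw [sum_insert hi, prod_insert hi, map_add_eq_mul, ih]

theorem one_sub_map_neg [AddGroup G] (ψ : AddChar G R) (a : G) :
    1 - ψ (-a) = -ψ (-a) * (1 - ψ a) := by
  have h : ψ (-a) * ψ a = 1 := by rw [← map_add_eq_mul, neg_add_cancel, map_zero_eq_one]
  linear_combination -h

theorem prod_one_sub_map_neg [AddCommGroup G] (ψ : AddChar G R) (s : Finset G) :
    ∏ a ∈ s, (1 - ψ (-a)) = (-1) ^ #s * ψ (-∑ a ∈ s, a) * ∏ a ∈ s, (1 - ψ a) := by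
  rw [prod_congr rfl fun a _ ↦ one_sub_map_neg ψ a, prod_mul_distrib, prod_neg,
    ← sum_neg_distrib, map_sum_eq_prod]

end AddChar

theorem Finset.union_neg_eq_univ_erase_zero {G : Type*} [AddGroup G] [Fintype G] [DecidableEq G]
    {S : Finset G} (h0 : 0 ∉ S) (hdisj : Disjoint S (-S)) (hcard : 2 * #S + 1 = Fintype.card G) :
    S ∪ -S = univ.erase 0 := by
  refine eq_of_subset_of_card_le (fun a ha ↦ mem_erase.2 ⟨?_, mem_univ a⟩) ?_
  · rintro rfl
    rcases mem_union.1 ha with h | h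
    · exact h0 h
    · exact h0 (by simpa using h)
  · rw [card_union_of_disjoint hdisj, card_neg, card_erase_of_mem (mem_univ _), card_univ]
    omega

theorem IsPrimitiveRoot.prod_one_sub_zmodChar_eq_order {R : Type*} [CommRing R] [IsDomain R]
    {n : ℕ} [NeZero n] {ω : R} (hω : IsPrimitiveRoot ω n) :
    ∏ a ∈ univ.erase (0 : ZMod n), (1 - AddChar.zmodChar n hω.pow_eq_one a) = n := by
  obtain ⟨k, rfl⟩ := Nat.exists_eq_add_one_of_ne_zero (NeZero.ne n)
  rw [Nat.cast_add_one, ← hω.prod_one_sub_pow_eq_order]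
  have hval {a : ZMod (k + 1)} (ha : a ∈ univ.erase 0) : a.val - 1 + 1 = a.val :=
    Nat.sub_add_cancel (Nat.one_le_iff_ne_zero.2 ((ZMod.val_ne_zero a).2 (ne_of_mem_erase ha)))
  refine prod_nbij' (fun a ↦ a.val - 1) (fun j ↦ ((j + 1 : ℕ) : ZMod (k + 1))) ?_ ?_ ?_ ?_ ?_
  · intro a ha
    have := ZMod.val_lt a
    have := hval ha
    exact mem_range.2 (by omega : a.val - 1 < k)
  · intro j hj
    have hj' : j + 1 < k + 1 := Nat.add_lt_add_right (mem_range.1 hj) 1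
    refine mem_erase.2 ⟨(ZMod.val_ne_zero _).1 ?_, mem_univ _⟩
    rw [ZMod.val_natCast_of_lt hj']
    omega
  · intro a ha
    rw [hval ha, ZMod.natCast_zmod_val]
  · intro j hj
    rw [ZMod.val_natCast_of_lt (Nat.add_lt_add_right (mem_range.1 hj) 1), Nat.add_sub_cancel]
  · intro a ha
    rw [AddChar.zmodChar_apply, hval ha]

theorem IsPrimitiveRoot.sq_prod_one_sub_zmodChar {R : Type*} [CommRing R] [IsDomain R] {n : ℕ}
    [NeZero n] {ω : R} (hω : IsPrimitiveRoot ω n) {S : Finset (ZMod n)} (h0 : 0 ∉ S)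
    (hdisj : Disjoint S (-S)) (hcard : 2 * #S + 1 = n) (hsum : ∑ s ∈ S, s = 0) :
    (∏ s ∈ S, (1 - AddChar.zmodChar n hω.pow_eq_one s)) ^ 2 = (-1) ^ #S * n := by
  set ψ := AddChar.zmodChar n hω.pow_eq_one
  have hsplit := hω.prod_one_sub_zmodChar_eq_order
  rw [← union_neg_eq_univ_erase_zero h0 hdisj (by rwa [ZMod.card]), prod_union hdisj,
    prod_neg_index, ψ.prod_one_sub_map_neg, hsum, neg_zero, AddChar.map_zero_eq_one] at hsplit
  have hsign : ((-1 : R) ^ #S) ^ 2 = 1 := by rw [pow_right_comm, neg_one_sq, one_pow]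
  rw [← hsplit]
  linear_combination (-(∏ s ∈ S, (1 - ψ s)) ^ 2) * hsign

section PowersOfFiniteOrder

variable {M : Type*} [DecidableEq M]

theorem card_image_pow_range_orderOf [Monoid M] (u : M) :
    #((range (orderOf u)).image (u ^ ·)) = orderOf u := by
  rw [card_image_of_injOn (by simpa using pow_injOn_Iio_orderOf), card_range]

theorem zero_notMem_image_pow_range_orderOf [MonoidWithZero M] [Nontrivial M] (u : M) :
    0 ∉ (range (orderOf u)).image (u ^ ·) := by
  intro h
  obtain ⟨j, hj, hu⟩ := mem_image.1 h
  have hunit : IsUnit u := (orderOf_pos_iff.1 (Nat.zero_lt_of_lt (mem_range.1 hj))).isUnit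
  exact (hunit.pow j).ne_zero hu

theorem disjoint_image_pow_range_orderOf_neg [Monoid M] [HasDistribNeg M] {u : M}
    (h : ¬∃ k : ℕ, u ^ k = -1) :
    Disjoint ((range (orderOf u)).image (u ^ ·)) (-(range (orderOf u)).image (u ^ ·)) := by
  rw [disjoint_left]
  intro x hx hneg
  obtain ⟨a, -, rfl⟩ := mem_image.1 hx
  obtain ⟨y, hy, hya⟩ := mem_neg.1 hneg
  obtain ⟨b, hb, rfl⟩ := mem_image.1 hy
  refine h ⟨a + (orderOf u - b), ?_⟩
  rw [pow_add, ← hya, neg_mul, ← pow_add, Nat.add_sub_cancel' (mem_range.1 hb).le,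
    pow_orderOf_eq_one]

theorem sum_image_pow_range_orderOf [CommRing M] [IsDomain M] {u : M} (hu : u ≠ 1) :
    ∑ s ∈ (range (orderOf u)).image (u ^ ·), s = 0 := by
  rw [sum_image (by simpa using pow_injOn_Iio_orderOf)]
  obtain h | h := (orderOf u).eq_zero_or_pos
  · rw [h, sum_range_zero]
  · have := orderOf_eq_one_iff.not.2 hu
    exact (IsPrimitiveRoot.orderOf u).geom_sum_eq_zero (by omega)

theorem prod_image_pow_range_orderOf {N : Type*} [Monoid M] [CommMonoid N] (u : M) (g : M → N) :
    ∏ s ∈ (range (orderOf u)).image (u ^ ·), g s = ∏ j ∈ Icc 1 (orderOf u), g (u ^ j) := by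
  rw [prod_image (by simpa using pow_injOn_Iio_orderOf)]
  have hperiod : u ^ orderOf u = u ^ 0 := by rw [pow_orderOf_eq_one, pow_zero]
  rw [← Finset.Ico_add_one_right_eq_Icc, prod_Ico_eq_prod_range, Nat.add_sub_cancel]
  rcases h : orderOf u with _ | k
  · rfl
  · rw [h] at hperiod
    rw [prod_range_succ (fun j ↦ g (u ^ (1 + j))), prod_range_succ' (fun j ↦ g (u ^ j)),
      add_comm 1 k, hperiod]
    simp_rw [add_comm 1]

end PowersOfFiniteOrder

/-- If 2 is a semiprimitive root of an odd prime `p` and `ω` is a primitive `p`-th root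
of unity in `ℂ`, then `∏_{j=1}^{(p-1)/2} (1 - ω^{2^j})² = (-1)^{(p-1)/2} · p`. -/
theorem prod_one_sub_pow_two_sq
    (p : ℕ) (hp : p.Prime) (hodd : Odd p)
    (horder : orderOf (2 : ZMod p) = (p - 1) / 2)
    (hnosol : ¬ ∃ x : ℕ, (2 : ZMod p) ^ x = -1)
    (ω : ℂ) (hω : IsPrimitiveRoot ω p) :
    ∏ j ∈ Finset.Icc 1 ((p - 1) / 2), (1 - ω ^ (2 ^ j)) ^ 2 = (-1 : ℂ) ^ ((p - 1) / 2) * (p : ℂ) := by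
  have : Fact p.Prime := ⟨hp⟩
  have htwo : (2 : ZMod p) ≠ 1 := fun h ↦ one_ne_zero (by linear_combination h)
  have hhalf : 2 * ((p - 1) / 2) + 1 = p := by obtain ⟨k, rfl⟩ := hodd; omega
  have hcard := card_image_pow_range_orderOf (2 : ZMod p)
  have hsq := hω.sq_prod_one_sub_zmodChar (zero_notMem_image_pow_range_orderOf _)
    (disjoint_image_pow_range_orderOf_neg hnosol) (by rwa [hcard, horder])
    (sum_image_pow_range_orderOf htwo)
  rw [hcard, prod_image_pow_range_orderOf, horder] at hsq
  rw [prod_pow, ← hsq]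
  congr 2 with j
  rw [← AddChar.zmodChar_apply' hω.pow_eq_one, Nat.cast_pow, Nat.cast_ofNat]
end

section
/- Let p be an odd prime and let ω be any primitive p-th root of unity in the complex numbers. Then for every natural number k ≥ 1, the Newman sum satisfies S_p(2^k) = (1/p) · Σ_{l=1}^{p−1} ∏_{j=0}^{k−1} (1 − ω^{l·2^j}). -/
open Finset

theorem Nat.sum_digits_two_two_pow_add {k m : ℕ} (hm : m < 2 ^ k) :
    (Nat.digits 2 (2 ^ k + m)).sum = (Nat.digits 2 m).sum + 1 := by
  have hlen : (Nat.digits 2 m).length ≤ k := (Nat.digits_length_le_iff one_lt_two m).mpr hm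
  have hdigits := Nat.digits_append_zeroes_append_digits (b := 2) (n := m)
    (k := k - (Nat.digits 2 m).length) one_lt_two one_pos
  rw [Nat.add_sub_cancel' hlen, mul_one, add_comm] at hdigits
  rw [← hdigits]
  simp

theorem sum_neg_one_pow_sum_digits_two_mul_pow {R : Type*} [CommRing R] (z : R) (k : ℕ) :
    ∑ n ∈ range (2 ^ k), (-1 : R) ^ (Nat.digits 2 n).sum * z ^ n =
      ∏ j ∈ range k, (1 - z ^ 2 ^ j) := by
  induction k with
  | zero => simp
  | succ k ih =>
    have htop : ∀ m ∈ range (2 ^ k), (-1 : R) ^ (Nat.digits 2 (2 ^ k + m)).sum * z ^ (2 ^ k + m) =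
        -z ^ 2 ^ k * ((-1 : R) ^ (Nat.digits 2 m).sum * z ^ m) := fun m hm => by
      rw [Nat.sum_digits_two_two_pow_add (mem_range.mp hm), pow_succ, pow_add]
      ring
    rw [pow_succ, mul_two, sum_range_add, prod_range_succ, sum_congr rfl htop, ← mul_sum, ih]
    ring

theorem IsPrimitiveRoot.sum_pow_mul_eq_ite {R : Type*} [CommRing R] [IsDomain R] {ζ : R} {n : ℕ}
    (hζ : IsPrimitiveRoot ζ n) (m : ℕ) :
    ∑ l ∈ range n, ζ ^ (l * m) = if n ∣ m then (n : R) else 0 := by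
  simp_rw [mul_comm _ m, pow_mul]
  split_ifs with hdvd
  · simp [(hζ.pow_eq_one_iff_dvd m).mpr hdvd]
  · have hne : ζ ^ m - 1 ≠ 0 := sub_ne_zero.mpr fun h => hdvd ((hζ.pow_eq_one_iff_dvd m).mp h)
    have hgeom := mul_geom_sum (ζ ^ m) n
    rw [pow_right_comm, hζ.pow_eq_one, one_pow, sub_self] at hgeom
    exact (mul_eq_zero.mp hgeom).resolve_left hne

theorem newmanSum_eq_sum_prod_general
    (p : ℕ) (hp : p.Prime)
    (ω : ℂ) (hω : IsPrimitiveRoot ω p)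
    (k : ℕ) (hk : 1 ≤ k) :
    (newmanSum p (2 ^ k) : ℂ) =
      (1 / p) * ∑ l ∈ Finset.Icc 1 (p - 1), ∏ j ∈ Finset.range k, (1 - ω ^ (l * 2 ^ j)) := by
  have hp0 : (p : ℂ) ≠ 0 := Nat.cast_ne_zero.mpr hp.ne_zero
  have hfilter (n : ℕ) : (if p ∣ n then (-1 : ℂ) ^ (Nat.digits 2 n).sum else 0) =
      1 / p * ∑ l ∈ range p, (-1 : ℂ) ^ (Nat.digits 2 n).sum * (ω ^ l) ^ n := by
    rw [← mul_sum]
    simp_rw [← pow_mul, hω.sum_pow_mul_eq_ite n]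
    split_ifs
    · field_simp
    · simp
  have hzero : ∏ j ∈ range k, (1 - (ω ^ 0) ^ 2 ^ j) = 0 :=
    prod_eq_zero (mem_range.mpr hk) (by simp)
  calc (newmanSum p (2 ^ k) : ℂ)
      = 1 / p * ∑ l ∈ range p, ∑ n ∈ range (2 ^ k),
          (-1 : ℂ) ^ (Nat.digits 2 n).sum * (ω ^ l) ^ n := by
        push_cast [newmanSum, apply_ite (Int.cast : ℤ → ℂ)]
        rw [sum_congr rfl fun n _ => hfilter n, ← mul_sum, sum_comm]
    _ = 1 / p * ∑ l ∈ range p, ∏ j ∈ range k, (1 - (ω ^ l) ^ 2 ^ j) := by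
        simp_rw [sum_neg_one_pow_sum_digits_two_mul_pow]
    _ = _ := by
        rw [range_eq_Ico, sum_eq_sum_Ico_succ_bot hp.pos, hzero, zero_add,
          Icc_sub_one_right_eq_Ico_of_not_isMin (by simpa using hp.ne_zero)]
        simp_rw [← pow_mul]

/-- For an odd prime `p`, a primitive `p`-th root of unity `ω` in `ℂ`, and `k ≥ 1`,
`S_p(2^k) = (1/p) ∑_{l=1}^{p-1} ∏_{j=0}^{k-1} (1 - ω^{l·2^j})`. -/
theorem newmanSum_eq_sum_prod
    (p : ℕ) (hp : p.Prime) (hodd : Odd p)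
    (ω : ℂ) (hω : IsPrimitiveRoot ω p)
    (k : ℕ) (hk : 1 ≤ k) :
    (newmanSum p (2 ^ k) : ℂ) =
      (1 / p) * ∑ l ∈ Finset.Icc 1 (p - 1), ∏ j ∈ Finset.range k, (1 - ω ^ (l * 2 ^ j)) :=
  newmanSum_eq_sum_prod_general p hp ω hω k hk
end
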